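/- arXiv:2406.07881 — 2 statements merged into one kernel-verified Lean document; each statement's English description precedes it below -/
import Mathlib

section
/- Set T = 3π/4. The two-point boundary value problem: find differentiable y, Y : ℝ → ℝ with y′(t) = Y(t) and Y′(t) = −y(t) for all t, y(0) = 0, and Y(T) = −y(T), admits at least two distinct solutions: the pair (y, Y) = (sin, cos) is a solution, the pair (y, Y) = (0, 0) is a solution, and these two pairs are distinct. In particular, this boundary value problem does not have a unique solution. -/
/-- A pair `(y, Y)` of real functions solves the two-point boundary value problem
`y' = Y`, `Y' = -y`, `y 0 = 0`, `Y T = -(y T)` with `T = 3π/4`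
(the deterministic reduction of the system of Example 3.8). -/
def IsBVPSolution (y Y : ℝ → ℝ) : Prop :=
  (∀ t : ℝ, HasDerivAt y (Y t) t) ∧
  (∀ t : ℝ, HasDerivAt Y (-(y t)) t) ∧
  y 0 = 0 ∧
  Y (3 * Real.pi / 4) = -(y (3 * Real.pi / 4))

open Real

theorem cos_three_mul_pi_div_four_eq_neg_sin : cos (3 * π / 4) = -sin (3 * π / 4) := by
  have h : 3 * π / 4 = π - π / 4 := by ring
  rw [h, cos_pi_sub, sin_pi_sub, cos_pi_div_four, sin_pi_div_four]

theorem isBVPSolution_sin_cos : IsBVPSolution sin cos :=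
  ⟨hasDerivAt_sin, hasDerivAt_cos, sin_zero, cos_three_mul_pi_div_four_eq_neg_sin⟩

theorem isBVPSolution_zero : IsBVPSolution (fun _ => 0) (fun _ => 0) :=
  ⟨fun t => hasDerivAt_const t 0, fun t => by simpa using hasDerivAt_const t (0 : ℝ), rfl,
    neg_zero.symm⟩

/-- With `T = 3π/4`, both `(sin, cos)` and `(0, 0)` solve the boundary value
problem, and they are distinct; hence the problem has no unique solution. -/
theorem bvp_not_unique :
    IsBVPSolution Real.sin Real.cos ∧
    IsBVPSolution (fun _ => (0 : ℝ)) (fun _ => (0 : ℝ)) ∧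
    (Real.sin, Real.cos) ≠ ((fun _ => (0 : ℝ)), (fun _ => (0 : ℝ))) := by
  refine ⟨isBVPSolution_sin_cos, isBVPSolution_zero, fun h => ?_⟩
  have hcos : cos 0 = 0 := congrFun (congrArg Prod.snd h) 0
  exact one_ne_zero (cos_zero ▸ hcos)
end

section
/- Consider the coefficient map A(v) = (−E[y], E[Y], −z, 0) of the system of Example 3.8, acting on quadruples v = (y, Y, z, Z) of square-integrable real-valued random variables on a probability space (Ω, F, P). Then the monotonicity assumption (A₂)(i) fails for A: for all real numbers θ₁ ≥ 0 and θ₂ ≥ 0 there exist square-integrable real random variables y¹, Y¹, z¹, Z¹ and y², Y², z², Z² such that E[ −E[y¹−y²]·(y¹−y²) + E[Y¹−Y²]·(Y¹−Y²) − (z¹−z²)² ] > −θ₁·E[(y¹−y²)² + (z¹−z²)²] − θ₂·E[(Y¹−Y²)² + (Z¹−Z²)²]. (For instance Y¹ ≡ 1, Y² ≡ 0 and all other variables zero.) -/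
open MeasureTheory

/-- The monotonicity assumption (A₂)(i) fails for the coefficient map
`A(v) = (−E[y], E[Y], −z, 0)` of Example 3.8: for all `θ₁, θ₂ ≥ 0` there exist
square-integrable real random variables violating the monotonicity inequality strictly. -/
theorem example38_monotonicity_fails
    {Ω : Type*} [MeasurableSpace Ω] [Nonempty Ω] (P : Measure Ω) [IsProbabilityMeasure P] :
    ∀ θ₁ θ₂ : ℝ, 0 ≤ θ₁ → 0 ≤ θ₂ →
      ∃ y₁ Y₁ z₁ Z₁ y₂ Y₂ z₂ Z₂ : Ω → ℝ,
        MemLp y₁ 2 P ∧ MemLp Y₁ 2 P ∧ MemLp z₁ 2 P ∧ MemLp Z₁ 2 P ∧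
        MemLp y₂ 2 P ∧ MemLp Y₂ 2 P ∧ MemLp z₂ 2 P ∧ MemLp Z₂ 2 P ∧
        (∫ ω, (-(∫ ω', (y₁ ω' - y₂ ω') ∂P) * (y₁ ω - y₂ ω)
              + (∫ ω', (Y₁ ω' - Y₂ ω') ∂P) * (Y₁ ω - Y₂ ω)
              - (z₁ ω - z₂ ω) * (z₁ ω - z₂ ω)) ∂P)
          > -θ₁ * (∫ ω, ((y₁ ω - y₂ ω) ^ 2 + (z₁ ω - z₂ ω) ^ 2) ∂P)
            - θ₂ * (∫ ω, ((Y₁ ω - Y₂ ω) ^ 2 + (Z₁ ω - Z₂ ω) ^ 2) ∂P) := by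
  intro θ₁ θ₂ hθ₁ hθ₂
  refine ⟨0, 1, 0, 0, 0, 0, 0, 0, memLp_const 0, memLp_const 1, memLp_const 0,
    memLp_const 0, memLp_const 0, memLp_const 0, memLp_const 0, memLp_const 0, ?_⟩
  simp only [Pi.zero_apply, Pi.one_apply, sub_zero, integral_const, measure_univ,
    ENNReal.toReal_one, smul_eq_mul, one_mul, mul_one, mul_zero, neg_zero, zero_add,
    sub_zero, one_pow, zero_pow, add_zero]
  norm_num
  linarith
end
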